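/- Let σ₊, σ₋ > 0, and define the at-the-money price V(T) = (σ₋σ₊/(σ₋+σ₊)) ∫_0^T φ(s) ds with φ as in the two-valued LVM. Then V(T) = (σ₋²σ₊²/(4(σ₋²−σ₊²))) · [ (√(8T)/(σ₊√π)) e^{−σ₊² T/8} − (√(8T)/(σ₋√π)) e^{−σ₋² T/8} + (4/σ₊² + T) Erf(σ₊√T/√8) − (4/σ₋² + T) Erf(σ₋√T/√8) ], provided σ₊ ≠ σ₋. -/

import Mathlib

open Real MeasureTheory Filter Topology Asymptotics

noncomputable def stdN (z : ℝ) : ℝ := ∫ t in Set.Iic z, (1 / Real.sqrt (2 * π)) * Real.exp (-t ^ 2 / 2)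

noncomputable def Erf (x : ℝ) : ℝ := 2 / Real.sqrt π * ∫ t in (0 : ℝ)..x, Real.exp (-t ^ 2)

noncomputable def phi (σp σm t : ℝ) : ℝ :=
  1 / (Real.sqrt (2 * π * t) * (σp - σm)) *
      (σp * Real.exp (-σm ^ 2 * t / 8) - σm * Real.exp (-σp ^ 2 * t / 8))
    + σp * σm / (2 * (σp - σm)) *
      (stdN (Real.sqrt t * σm / 2) - stdN (Real.sqrt t * σp / 2))

open Set

lemma hasDerivAt_Erf (x : ℝ) : HasDerivAt Erf (2 / Real.sqrt π * Real.exp (-x ^ 2)) x := by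
  have hc : Continuous fun t : ℝ => Real.exp (-t ^ 2) := by continuity
  have h := intervalIntegral.integral_hasDerivAt_right (hc.intervalIntegrable 0 x)
    (hc.stronglyMeasurableAtFilter _ _) hc.continuousAt
  exact h.const_mul _

lemma continuous_Erf : Continuous Erf := by
  have h : Differentiable ℝ Erf := fun x => (hasDerivAt_Erf x).differentiableAt
  exact h.continuous

lemma Erf_zero : Erf 0 = 0 := by simp [Erf]

lemma gauss_integrable : Integrable (fun t : ℝ => (1 / Real.sqrt (2 * π)) * Real.exp (-t ^ 2 / 2)) := by
  have h : Integrable (fun t : ℝ => Real.exp (-(1/2 : ℝ) * t ^ 2)) := integrable_exp_neg_mul_sq (by norm_num)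
  have h2 := h.const_mul (1 / Real.sqrt (2 * π))
  convert h2 using 2 with t
  ring_nf

lemma stdN_zero : stdN 0 = 1 / 2 := by
  set g : ℝ → ℝ := fun t => (1 / Real.sqrt (2 * π)) * Real.exp (-t ^ 2 / 2) with hg
  have hint := gauss_integrable
  have hsym : (∫ x in Iic (0:ℝ), g x) = ∫ x in Ioi (0:ℝ), g x := by
    have := integral_comp_neg_Iic (0:ℝ) g
    rw [neg_zero] at this
    rw [← this]
    congr 1
    funext x
    simp [hg]
  have hsum : (∫ x in Iic (0:ℝ), g x) + (∫ x in Ioi (0:ℝ), g x) = ∫ x, g x :=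
    intervalIntegral.integral_Iic_add_Ioi hint.integrableOn hint.integrableOn
  have htot : (∫ x, g x) = 1 := by
    have h1 : (∫ x : ℝ, Real.exp (-(1/2 : ℝ) * x ^ 2)) = Real.sqrt (π / (1/2)) := integral_gaussian (1/2)
    have h2 : (∫ x, g x) = (1 / Real.sqrt (2 * π)) * ∫ x : ℝ, Real.exp (-(1/2 : ℝ) * x ^ 2) := by
      rw [← integral_const_mul]
      congr 1; funext x; simp only [hg]; ring_nf
    rw [h2, h1]
    have : π / (1/2) = 2 * π := by ring
    rw [this]
    field_simp
  have : stdN 0 = ∫ x in Iic (0:ℝ), g x := rfl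
  rw [this]
  linarith [hsym, hsum, htot]

lemma hasDerivAt_stdN (z : ℝ) :
    HasDerivAt stdN ((1 / Real.sqrt (2 * π)) * Real.exp (-z ^ 2 / 2)) z := by
  set g : ℝ → ℝ := fun t => (1 / Real.sqrt (2 * π)) * Real.exp (-t ^ 2 / 2) with hg
  have hint := gauss_integrable
  have hc : Continuous g := by fun_prop
  have heq : stdN = fun z => stdN 0 + ∫ x in (0:ℝ)..z, g x := by
    funext z
    rw [← intervalIntegral.integral_Iic_sub_Iic hint.integrableOn hint.integrableOn]
    simp [stdN]
  rw [heq]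
  exact (intervalIntegral.integral_hasDerivAt_right (hc.intervalIntegrable 0 z)
    (hc.stronglyMeasurableAtFilter _ _) hc.continuousAt).const_add _

lemma stdN_eq (z : ℝ) : stdN z = 1 / 2 + Erf (z / Real.sqrt 2) / 2 := by
  have key : ∀ x : ℝ, stdN x - (1 / 2 + Erf (x / Real.sqrt 2) / 2) = stdN 0 - (1/2 + Erf 0 / 2) := by
    intro x
    set f : ℝ → ℝ := fun x => stdN x - (1 / 2 + Erf (x / Real.sqrt 2) / 2) with hf
    have hd : ∀ x : ℝ, HasDerivAt f 0 x := by
      intro x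
      have h1 := hasDerivAt_stdN x
      have h2 : HasDerivAt (fun x : ℝ => x / Real.sqrt 2) (1 / Real.sqrt 2) x := by
        simpa using (hasDerivAt_id x).div_const (Real.sqrt 2)
      have h3 := ((hasDerivAt_Erf (x / Real.sqrt 2)).comp x h2).div_const 2
      have h4 := h1.sub (h3.const_add (1/2 : ℝ))
      refine h4.congr_deriv (Eq.symm ?_)
      have hx : (x / Real.sqrt 2) ^ 2 = x ^ 2 / 2 := by
        rw [div_pow, Real.sq_sqrt (by norm_num : (0:ℝ) ≤ 2)]
      rw [hx]
      have h2p : Real.sqrt (2 * π) = Real.sqrt 2 * Real.sqrt π := Real.sqrt_mul (by norm_num) _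
      have hs2 : Real.sqrt 2 ≠ 0 := by positivity
      have hsp : Real.sqrt π ≠ 0 := by positivity
      rw [h2p]
      field_simp
      ring
    have h0 := is_const_of_deriv_eq_zero (fun x => (hd x).differentiableAt)
      (fun x => (hd x).deriv) x 0
    simpa [hf] using h0
  have := key z
  rw [stdN_zero, Erf_zero] at this
  linarith

lemma continuous_stdN : Continuous stdN := by
  have : stdN = fun z => 1 / 2 + Erf (z / Real.sqrt 2) / 2 := funext stdN_eq
  rw [this]
  exact continuous_const.add ((continuous_Erf.comp (continuous_id.div_const _)).div_const _)

noncomputable def Fa (σ t : ℝ) : ℝ :=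
  Real.sqrt 8 * Real.sqrt t / (σ * Real.sqrt π) * Real.exp (-σ ^ 2 * t / 8)
    + (4 / σ ^ 2 + t) * Erf (σ * Real.sqrt t / Real.sqrt 8)

lemma continuous_Fa (σ : ℝ) : Continuous (Fa σ) := by
  apply Continuous.add
  · exact ((continuous_const.mul Real.continuous_sqrt).div_const _).mul
      (Real.continuous_exp.comp (by fun_prop))
  · exact (continuous_const.add continuous_id).mul
      (continuous_Erf.comp ((continuous_const.mul Real.continuous_sqrt).div_const _))

lemma Fa_zero (σ : ℝ) : Fa σ 0 = 0 := by
  simp [Fa, Erf_zero]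

lemma hasDerivAt_Fa (σ : ℝ) (hσ : 0 < σ) {t : ℝ} (ht : 0 < t) :
    HasDerivAt (Fa σ)
      (Real.sqrt 8 * Real.exp (-σ ^ 2 * t / 8) / (σ * Real.sqrt π * Real.sqrt t)
        + Erf (σ * Real.sqrt t / Real.sqrt 8)) t := by
  have hst : (0:ℝ) < Real.sqrt t := Real.sqrt_pos.2 ht
  have h8 : (0:ℝ) < Real.sqrt 8 := Real.sqrt_pos.2 (by norm_num)
  have hπ : (0:ℝ) < Real.sqrt π := Real.sqrt_pos.2 pi_pos
  have hs : HasDerivAt Real.sqrt (1 / (2 * Real.sqrt t)) t := Real.hasDerivAt_sqrt ht.ne'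
  have hinner : HasDerivAt (fun u : ℝ => -σ ^ 2 * u / 8) (-σ ^ 2 * 1 / 8) t :=
    ((hasDerivAt_id t).const_mul (-σ ^ 2)).div_const 8
  have hexp : HasDerivAt (fun u : ℝ => Real.exp (-σ ^ 2 * u / 8))
      (Real.exp (-σ ^ 2 * t / 8) * (-σ ^ 2 * 1 / 8)) t := hinner.exp
  have h1 : HasDerivAt (fun u : ℝ => Real.sqrt 8 * Real.sqrt u / (σ * Real.sqrt π) *
      Real.exp (-σ ^ 2 * u / 8))
      ((Real.sqrt 8 * (1 / (2 * Real.sqrt t)) / (σ * Real.sqrt π)) * Real.exp (-σ ^ 2 * t / 8)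
        + Real.sqrt 8 * Real.sqrt t / (σ * Real.sqrt π) *
          (Real.exp (-σ ^ 2 * t / 8) * (-σ ^ 2 * 1 / 8))) t :=
    (((hs.const_mul (Real.sqrt 8)).div_const (σ * Real.sqrt π)).mul hexp)
  have h2i : HasDerivAt (fun u : ℝ => σ * Real.sqrt u / Real.sqrt 8)
      (σ * (1 / (2 * Real.sqrt t)) / Real.sqrt 8) t := (hs.const_mul σ).div_const _
  have h2 : HasDerivAt (fun u : ℝ => Erf (σ * Real.sqrt u / Real.sqrt 8))
      ((2 / Real.sqrt π * Real.exp (-(σ * Real.sqrt t / Real.sqrt 8) ^ 2)) *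
        (σ * (1 / (2 * Real.sqrt t)) / Real.sqrt 8)) t :=
    (hasDerivAt_Erf _).comp t h2i
  have h3 : HasDerivAt (fun u : ℝ => (4 / σ ^ 2 + u)) 1 t := (hasDerivAt_id t).const_add _
  have h4 := h3.mul h2
  have htot := h1.add h4
  have harg : (σ * Real.sqrt t / Real.sqrt 8) ^ 2 = σ ^ 2 * t / 8 := by
    rw [div_pow, mul_pow, Real.sq_sqrt ht.le, Real.sq_sqrt (by norm_num : (0:ℝ) ≤ 8)]
  rw [harg] at htot
  refine htot.congr_deriv (Eq.symm ?_)
  have h88 : Real.sqrt 8 * Real.sqrt 8 = 8 := Real.mul_self_sqrt (by norm_num)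
  have hss : Real.sqrt t * Real.sqrt t = t := Real.mul_self_sqrt ht.le
  have hexpneg : Real.exp (-(σ ^ 2 * t / 8)) = Real.exp (-σ ^ 2 * t / 8) := by ring_nf
  rw [hexpneg]
  set E := Real.exp (-σ ^ 2 * t / 8) with hE
  set R := Erf (σ * Real.sqrt t / Real.sqrt 8) with hR
  set e := Real.sqrt 8 with he
  set s := Real.sqrt t with hsdef
  rw [← h88, ← hss]
  field_simp
  linear_combination E * h88

theorem stmt17 (σp σm T : ℝ) (hp : 0 < σp) (hm : 0 < σm) (hne : σp ≠ σm) (hT : 0 < T) :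
    σm * σp / (σm + σp) * ∫ s in (0 : ℝ)..T, phi σp σm s
      = σm ^ 2 * σp ^ 2 / (4 * (σm ^ 2 - σp ^ 2)) *
          (Real.sqrt (8 * T) / (σp * Real.sqrt π) * Real.exp (-σp ^ 2 * T / 8)
            - Real.sqrt (8 * T) / (σm * Real.sqrt π) * Real.exp (-σm ^ 2 * T / 8)
            + (4 / σp ^ 2 + T) * Erf (σp * Real.sqrt T / Real.sqrt 8)
            - (4 / σm ^ 2 + T) * Erf (σm * Real.sqrt T / Real.sqrt 8)) := by
  have hπ : (0:ℝ) < Real.sqrt π := Real.sqrt_pos.2 pi_pos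
  have hr2 : (0:ℝ) < Real.sqrt 2 := Real.sqrt_pos.2 (by norm_num)
  have hst8 : Real.sqrt 8 = 2 * Real.sqrt 2 := by
    rw [show (8:ℝ) = 2^2*2 by norm_num, Real.sqrt_mul (by positivity), Real.sqrt_sq (by norm_num)]
  have hpm : σp - σm ≠ 0 := sub_ne_zero.2 hne
  have hmp : σm - σp ≠ 0 := sub_ne_zero.2 (Ne.symm hne)
  set c : ℝ := σm * σp / (4 * (σm - σp)) with hc
  set F : ℝ → ℝ := fun t => c * (Fa σp t - Fa σm t) with hF
  have hFderiv : ∀ t ∈ Ioo (0:ℝ) T, HasDerivAt F (phi σp σm t) t := by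
    intro t ht
    have hd := ((hasDerivAt_Fa σp hp ht.1).sub (hasDerivAt_Fa σm hm ht.1)).const_mul c
    refine hd.congr_deriv (Eq.symm ?_)
    have hst : (0:ℝ) < Real.sqrt t := Real.sqrt_pos.2 ht.1
    have harg : ∀ σ : ℝ, Real.sqrt t * σ / 2 / Real.sqrt 2 = σ * Real.sqrt t / Real.sqrt 8 := by
      intro σ; rw [hst8]; field_simp
    rw [phi, stdN_eq, stdN_eq, harg, harg]
    rw [show Real.sqrt (2*π*t) = Real.sqrt 2 * Real.sqrt π * Real.sqrt t by
      rw [Real.sqrt_mul (by positivity) t, Real.sqrt_mul (by norm_num) π]]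
    set Ep := Real.exp (-σp^2*t/8) with hEp
    set Em := Real.exp (-σm^2*t/8) with hEm
    set Rp := Erf (σp * Real.sqrt t / Real.sqrt 8) with hRp
    set Rm := Erf (σm * Real.sqrt t / Real.sqrt 8) with hRm
    rw [hst8, hc]
    have hrr : Real.sqrt 2 * Real.sqrt 2 = 2 := Real.mul_self_sqrt (by norm_num)
    set r := Real.sqrt 2 with hrdef
    rw [← hrr]
    field_simp
    linear_combination
      ((r^5+2*r^3) * (σp^2*Em + σm^2*Ep - σp*σm*Em - σp*σm*Ep)
        + (r^2+2) * Real.sqrt π * Real.sqrt t * (σp^2*σm - σp*σm^2) * (Rm - Rp)) * hrr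
  have hFcont : ContinuousOn F (Icc (0:ℝ) T) :=
    (continuous_const.mul ((continuous_Fa σp).sub (continuous_Fa σm))).continuousOn
  have hphi_int : IntervalIntegrable (phi σp σm) volume 0 T := by
    have hrpow : IntervalIntegrable (fun t : ℝ => t ^ (-(1/2) : ℝ)) volume 0 T :=
      intervalIntegral.intervalIntegrable_rpow' (by norm_num)
    have hbase : IntervalIntegrable
        (fun t : ℝ => 1 / (Real.sqrt (2 * π * t) * (σp - σm))) volume 0 T := by
      have h := hrpow.const_mul (1 / (Real.sqrt (2 * π) * (σp - σm)))
      rw [intervalIntegrable_iff] at h ⊢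
      apply h.congr_fun _ measurableSet_uIoc
      intro t ht
      rw [Set.uIoc_of_le hT.le] at ht
      have ht0 : 0 < t := ht.1
      show 1 / (Real.sqrt (2 * π) * (σp - σm)) * t ^ (-(1/2) : ℝ)
        = 1 / (Real.sqrt (2 * π * t) * (σp - σm))
      have hsplit : Real.sqrt (2 * π * t) = Real.sqrt (2 * π) * Real.sqrt t :=
        Real.sqrt_mul (by positivity) t
      have hpow : t ^ (-(1/2) : ℝ) = (Real.sqrt t)⁻¹ := by
        rw [Real.rpow_neg ht0.le, Real.sqrt_eq_rpow]
      rw [hsplit, hpow]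
      have hstp : (0:ℝ) < Real.sqrt t := Real.sqrt_pos.2 ht0
      field_simp
    have h1 : IntervalIntegrable (fun t : ℝ =>
        1 / (Real.sqrt (2 * π * t) * (σp - σm)) *
          (σp * Real.exp (-σm ^ 2 * t / 8) - σm * Real.exp (-σp ^ 2 * t / 8))) volume 0 T :=
      hbase.mul_continuousOn (by fun_prop)
    have h2 : IntervalIntegrable (fun t : ℝ =>
        σp * σm / (2 * (σp - σm)) *
          (stdN (Real.sqrt t * σm / 2) - stdN (Real.sqrt t * σp / 2))) volume 0 T := by
      apply Continuous.intervalIntegrable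
      apply Continuous.mul continuous_const
      exact (continuous_stdN.comp (by fun_prop)).sub (continuous_stdN.comp (by fun_prop))
    exact h1.add h2
  have key : (∫ s in (0:ℝ)..T, phi σp σm s) = F T - F 0 :=
    intervalIntegral.integral_eq_sub_of_hasDerivAt_of_le hT.le hFcont hFderiv hphi_int
  have hF0 : F 0 = 0 := by simp [hF, Fa_zero]
  rw [key, hF0, sub_zero]
  have hsplit : Real.sqrt (8 * T) = Real.sqrt 8 * Real.sqrt T :=
    Real.sqrt_mul (by norm_num) T
  rw [hsplit, hF, hc]
  simp only [Fa]
  have hsum : σm + σp ≠ 0 := by positivity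
  have hsq : σm ^ 2 - σp ^ 2 ≠ 0 := by
    intro h
    apply hmp
    have : (σm - σp) * (σm + σp) = 0 := by ring_nf; linarith [h]
    rcases mul_eq_zero.1 this with h' | h'
    · exact h'
    · exact absurd h' hsum
  field_simp
  ring
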